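/- Let λ > 0 and fix real J, Q. Define F₁(A) = A/(16π) + (π/A)(4J²+Q⁴) + Q²/2 and F₂(A) = J² + (A/(8π))(Q² + A/(4π) + λA²/(32π²)) for A > 0. Then inf_{A>0} [F₁(A) + λ F₂(A)] > inf_{A>0} F₁(A) = (Q² + √(Q⁴+4J²))/2, provided (J,Q) ≠ (0,0). -/

import Mathlib

/-!
Completing the square, `F1 A - m = (A - 4πs)² / (16πA)` with `s = √(Q⁴ + 4J²)` and
`m = (Q² + s)/2`, so `F1` attains its infimum `m` at `A = 4πs`. The correction term satisfies
`F2 A ≥ A² / (32π²)`. A uniform gap above `m` follows by splitting at `A = 2πs`: for small `A`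
the square is at least `(2πs)²`, for large `A` the correction is at least `λs²/8`.
-/

noncomputable def F1 (J Q A : ℝ) : ℝ :=
  A / (16 * Real.pi) + (Real.pi / A) * (4 * J ^ 2 + Q ^ 4) + Q ^ 2 / 2

noncomputable def F2 (lam J Q A : ℝ) : ℝ :=
  J ^ 2 + (A / (8 * Real.pi)) *
    (Q ^ 2 + A / (4 * Real.pi) + lam * A ^ 2 / (32 * Real.pi ^ 2))

open Real

lemma le_sInf_setOf_pos {f : ℝ → ℝ} {b : ℝ} (h : ∀ A > 0, b ≤ f A) :
    b ≤ sInf {x | ∃ A > 0, x = f A} :=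
  le_csInf ⟨f 1, 1, one_pos, rfl⟩ (by rintro x ⟨A, hA, rfl⟩; exact h A hA)

noncomputable def extremalMass (J Q : ℝ) : ℝ := (Q ^ 2 + √(Q ^ 4 + 4 * J ^ 2)) / 2

lemma pow_four_add_four_mul_sq_pos {J Q : ℝ} (hJQ : (J, Q) ≠ (0, 0)) : 0 < Q ^ 4 + 4 * J ^ 2 := by
  have hne : J ≠ 0 ∨ Q ≠ 0 := by
    by_contra! h
    exact hJQ (by rw [h.1, h.2])
  rcases hne with h | h <;> positivity

lemma F1_sub_extremalMass (J Q : ℝ) {A : ℝ} (hA : A ≠ 0) :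
    F1 J Q A - extremalMass J Q = (A - 4 * π * √(Q ^ 4 + 4 * J ^ 2)) ^ 2 / (16 * π * A) := by
  have hs : √(Q ^ 4 + 4 * J ^ 2) ^ 2 = Q ^ 4 + 4 * J ^ 2 := sq_sqrt (by positivity)
  rw [F1, extremalMass]
  field_simp
  linear_combination (-32 * π ^ 2) * hs

lemma extremalMass_le_F1 (J Q : ℝ) {A : ℝ} (hA : 0 < A) : extremalMass J Q ≤ F1 J Q A := by
  have h := F1_sub_extremalMass J Q hA.ne'
  have : 0 ≤ (A - 4 * π * √(Q ^ 4 + 4 * J ^ 2)) ^ 2 / (16 * π * A) := by positivity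
  linarith

lemma isLeast_F1 {J Q : ℝ} (hJQ : (J, Q) ≠ (0, 0)) :
    IsLeast {x | ∃ A > 0, x = F1 J Q A} (extremalMass J Q) := by
  set s := √(Q ^ 4 + 4 * J ^ 2)
  have hs : 0 < s := sqrt_pos.mpr (pow_four_add_four_mul_sq_pos hJQ)
  refine ⟨⟨4 * π * s, by positivity, ?_⟩, ?_⟩
  · have h := F1_sub_extremalMass J Q (A := 4 * π * s) (by positivity)
    rw [sub_self, zero_pow two_ne_zero, zero_div] at h
    linarith
  · rintro x ⟨A, hA, rfl⟩
    exact extremalMass_le_F1 J Q hA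

lemma sq_div_le_F2 {lam : ℝ} (J Q : ℝ) (hlam : 0 ≤ lam) {A : ℝ} (hA : 0 ≤ A) :
    A ^ 2 / (32 * π ^ 2) ≤ F2 lam J Q A := by
  have hsplit : F2 lam J Q A = J ^ 2 + A / (8 * π) * (Q ^ 2 + lam * A ^ 2 / (32 * π ^ 2))
      + A ^ 2 / (32 * π ^ 2) := by
    rw [F2]; field_simp; ring
  have : 0 ≤ A / (8 * π) * (Q ^ 2 + lam * A ^ 2 / (32 * π ^ 2)) := by positivity
  nlinarith [sq_nonneg J]

lemma min_le_sq_div_add_sq_div {lam s A : ℝ} (hlam : 0 ≤ lam) (hs : 0 < s) (hA : 0 < A) :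
    min (s / 8) (lam * s ^ 2 / 8) ≤
      (A - 4 * π * s) ^ 2 / (16 * π * A) + lam * (A ^ 2 / (32 * π ^ 2)) := by
  have hπ := pi_pos
  have hsq : 0 ≤ (A - 4 * π * s) ^ 2 / (16 * π * A) := by positivity
  have hcorr : 0 ≤ lam * (A ^ 2 / (32 * π ^ 2)) := by positivity
  rcases le_total A (2 * π * s) with hsmall | hlarge
  · have h : s / 8 ≤ (A - 4 * π * s) ^ 2 / (16 * π * A) := by
      rw [div_le_div_iff₀ (by norm_num) (by positivity)]
      nlinarith [mul_le_mul_of_nonneg_left hsmall (by positivity : 0 ≤ 2 * π * s)]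
    linarith [min_le_left (s / 8) (lam * s ^ 2 / 8)]
  · have h : lam * s ^ 2 / 8 ≤ lam * (A ^ 2 / (32 * π ^ 2)) := by
      rw [← mul_div_assoc, div_le_div_iff₀ (by norm_num) (by positivity)]
      nlinarith [mul_le_mul hlarge hlarge (by positivity) hA.le, mul_nonneg hlam (sq_nonneg π)]
    linarith [min_le_right (s / 8) (lam * s ^ 2 / 8)]

lemma extremalMass_lt_sInf_F1_add_F2 {lam J Q : ℝ} (hlam : 0 < lam) (hJQ : (J, Q) ≠ (0, 0)) :
    extremalMass J Q < sInf {x | ∃ A > 0, x = F1 J Q A + lam * F2 lam J Q A} := by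
  set s := √(Q ^ 4 + 4 * J ^ 2)
  have hs : 0 < s := sqrt_pos.mpr (pow_four_add_four_mul_sq_pos hJQ)
  have hε : 0 < min (s / 8) (lam * s ^ 2 / 8) := lt_min (by positivity) (by positivity)
  refine (lt_add_of_pos_right _ hε).trans_le (le_sInf_setOf_pos fun A hA => ?_)
  have hF1 := F1_sub_extremalMass J Q hA.ne'
  have hF2 := mul_le_mul_of_nonneg_left (sq_div_le_F2 J Q hlam.le hA.le) hlam.le
  linarith [min_le_sq_div_add_sq_div hlam.le hs hA]

theorem stmt3 (lam J Q : ℝ) (hlam : 0 < lam) (hJQ : (J, Q) ≠ (0, 0)) :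
    sInf {x | ∃ A > 0, x = F1 J Q A} = (Q ^ 2 + Real.sqrt (Q ^ 4 + 4 * J ^ 2)) / 2 ∧
      (Q ^ 2 + Real.sqrt (Q ^ 4 + 4 * J ^ 2)) / 2 <
        sInf {x | ∃ A > 0, x = F1 J Q A + lam * F2 lam J Q A} :=
  ⟨(isLeast_F1 hJQ).csInf_eq, extremalMass_lt_sInf_F1_add_F2 hlam hJQ⟩
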